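/- Let V' be a finite-dimensional real vector space with a symmetric bilinear form ⟨·,·⟩ and let V = V' ⊕ ℝv ⊕ ℝv* carry the hyperbolic extension of the form (V' ⊥ (ℝv ⊕ ℝv*), v² = v*² = 0, ⟨v,v*⟩ = 1). For B ∈ V' with B² ≠ 0 define the linear map φ_B : V → V by φ_B(v) = v, φ_B(v*) = B + v* − (B²/2)v, and φ_B(x) = x − ⟨B,x⟩v for x ∈ V'. Then φ_B is an isometry of V, and for every y ∈ V with φ_B(y) ≠ y the sequence of lines [φ_B^k(y)] converges to [v] in the projectivization ℙ(V) as k → ∞. -/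

import Mathlib

open scoped LinearAlgebra.Projectivization

/-- The quotient topology on a projectivization. -/
noncomputable instance projTopology {K V : Type*} [DivisionRing K] [AddCommGroup V]
    [Module K V] [TopologicalSpace V] : TopologicalSpace (ℙ K V) :=
  inferInstanceAs (TopologicalSpace (Quotient (projectivizationSetoid K V)))

/-- The hyperbolic extension form on `V' × ℝ × ℝ`, where `(x, a, c)` represents
`x + a•v + c•v*`:  `V' ⊥ (ℝv ⊕ ℝv*)`, `v² = v*² = 0`, `⟨v,v*⟩ = 1`. -/
noncomputable def hypPairing {V : Type*} [AddCommGroup V] [Module ℝ V]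
    (b : LinearMap.BilinForm ℝ V) (p q : V × ℝ × ℝ) : ℝ :=
  b p.1 q.1 + p.2.1 * q.2.2 + p.2.2 * q.2.1

/-- The map `φ_B`: `φ_B(v) = v`, `φ_B(v*) = B + v* − (B²/2)v`, `φ_B(x) = x − ⟨B,x⟩v` for
`x ∈ V'`, written in the coordinates `(x, a, c) = x + a•v + c•v*`. -/
noncomputable def phiB {V : Type*} [AddCommGroup V] [Module ℝ V]
    (b : LinearMap.BilinForm ℝ V) (B : V) (p : V × ℝ × ℝ) : V × ℝ × ℝ :=
  (p.1 + p.2.2 • B, p.2.1 - b B p.1 - p.2.2 * (b B B / 2), p.2.2)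

/-! In the coordinates `(x, a, c)` the `k`-th iterate of `φ_B` is
`(x + k c B, a - k ⟨B,x⟩ - c B² k² / 2, c)`. Its `v`-coordinate grows quadratically if `c ≠ 0`
(as `B² ≠ 0`) and linearly if `c = 0` (then `φ_B y ≠ y` forces `⟨B,x⟩ ≠ 0`), strictly faster
than the other coordinates. Rescaled by `k⁻²` resp. `k⁻¹`, the iterates therefore converge to a
nonzero multiple of `v`, and hence so do their lines. -/

open Filter Topology

theorem Projectivization.tendsto_mk_of_tendsto_smul {K V α : Type*} [DivisionRing K]
    [AddCommGroup V] [Module K V] [TopologicalSpace V] [T1Space V] {l : Filter α} {f : α → V}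
    (hf : ∀ a, f a ≠ 0) {t : α → K} {v : V} (hv : v ≠ 0)
    (h : Tendsto (fun a => t a • f a) l (𝓝 v)) :
    Tendsto (fun a => mk K (f a) (hf a)) l (𝓝 (mk K v hv)) := by
  have hne : ∀ᶠ a in l, t a • f a ≠ 0 := h.eventually (isOpen_ne.mem_nhds hv)
  let u : α → {w : V // w ≠ 0} := fun a =>
    open Classical in if ha : t a • f a = 0 then ⟨f a, hf a⟩ else ⟨t a • f a, ha⟩
  have hu : Tendsto u l (𝓝 ⟨v, hv⟩) := by
    rw [tendsto_subtype_rng]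
    refine h.congr' ?_
    filter_upwards [hne] with a ha
    simp [u, ha]
  refine ((continuous_quotient_mk'.tendsto _).comp hu).congr' ?_
  filter_upwards [hne] with a ha
  change mk' K (u a) = _
  rw [mk'_eq_mk, mk_eq_mk_iff']
  exact ⟨t a, by simp [u, ha]⟩

theorem Projectivization.mk_smul_eq {K V : Type*} [DivisionRing K] [AddCommGroup V]
    [Module K V] {r : K} (hr : r ≠ 0) {v : V} (hv : v ≠ 0) :
    mk K (r • v) (smul_ne_zero hr hv) = mk K v hv :=
  (mk_eq_mk_iff' K _ _ _ _).2 ⟨r, rfl⟩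

section phiB

variable {V : Type*} [AddCommGroup V] [Module ℝ V] (b : LinearMap.BilinForm ℝ V) (B : V)

theorem hypPairing_phiB (hb : ∀ x y, b x y = b y x) (p q : V × ℝ × ℝ) :
    hypPairing b (phiB b B p) (phiB b B q) = hypPairing b p q := by
  simp only [hypPairing, phiB, map_add, map_smul, LinearMap.add_apply, LinearMap.smul_apply,
    smul_eq_mul]
  rw [hb p.1 B]
  ring

theorem phiB_iterate (x : V) (a c : ℝ) (k : ℕ) :
    (phiB b B)^[k] (x, a, c) =
      (x + ((k : ℝ) * c) • B, a - k * b B x - c * b B B * k ^ 2 / 2, c) := by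
  induction k with
  | zero => simp
  | succ k ih =>
    rw [Function.iterate_succ_apply', ih]
    simp only [phiB, map_add, map_smul, smul_eq_mul, Prod.mk.injEq, and_true]
    push_cast
    constructor
    · rw [add_assoc, ← add_smul]
      ring_nf
    · ring

variable [TopologicalSpace V] [ContinuousSMul ℝ V]

theorem tendsto_inv_smul_phiB_iterate (x : V) (a : ℝ) :
    Tendsto (fun k : ℕ => (k : ℝ)⁻¹ • (phiB b B)^[k] (x, a, 0)) atTop
      (𝓝 ((-b B x) • ((0 : V), (1 : ℝ), (0 : ℝ)))) := by
  have hF : Continuous fun u : ℝ => (u • x, u * a - b B x, (0 : ℝ)) := by fun_prop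
  have := (hF.tendsto 0).comp tendsto_inv_atTop_nhds_zero_nat
  refine (this.congr' ?_).trans_eq (by simp)
  filter_upwards [eventually_ne_atTop 0] with k hk
  have hk : (k : ℝ) ≠ 0 := Nat.cast_ne_zero.2 hk
  simp only [Function.comp_apply, phiB_iterate, mul_zero, zero_smul, add_zero, zero_mul, zero_div,
    sub_zero, Prod.smul_mk, smul_eq_mul, Prod.mk.injEq, and_true, true_and]
  field_simp

theorem tendsto_inv_sq_smul_phiB_iterate [ContinuousAdd V] (x : V) (a c : ℝ) :
    Tendsto (fun k : ℕ => ((k : ℝ) ^ 2)⁻¹ • (phiB b B)^[k] (x, a, c)) atTop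
      (𝓝 ((-(c * b B B / 2)) • ((0 : V), (1 : ℝ), (0 : ℝ)))) := by
  have hF : Continuous fun u : ℝ =>
      (u ^ 2 • x + (u * c) • B, u ^ 2 * a - u * b B x - c * b B B / 2, u ^ 2 * c) := by
    fun_prop
  have := (hF.tendsto 0).comp tendsto_inv_atTop_nhds_zero_nat
  refine (this.congr' ?_).trans_eq (by simp)
  filter_upwards [eventually_ne_atTop 0] with k hk
  have hk : (k : ℝ) ≠ 0 := Nat.cast_ne_zero.2 hk
  simp only [phiB_iterate, Prod.smul_mk, smul_add, smul_smul, smul_eq_mul, Function.comp_apply,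
    Prod.mk.injEq, inv_pow]
  refine ⟨by congr 2; field_simp, by field_simp, trivial⟩

end phiB

/-- `φ_B` is an isometry of `V = V' ⊕ ℝv ⊕ ℝv*`, and for every `y` with `φ_B(y) ≠ y`
the lines `[φ_B^k(y)]` converge to `[v]` in `ℙ(V)` as `k → ∞`. -/
theorem stmt10 (n : ℕ) (b : LinearMap.BilinForm ℝ (Fin n → ℝ))
    (hsymm : ∀ x y, b x y = b y x) (B : Fin n → ℝ) (hB : b B B ≠ 0) :
    (∀ p q : (Fin n → ℝ) × ℝ × ℝ,
        hypPairing b (phiB b B p) (phiB b B q) = hypPairing b p q) ∧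
    (∀ y : (Fin n → ℝ) × ℝ × ℝ, phiB b B y ≠ y →
      ∀ hk : ∀ k : ℕ, (phiB b B)^[k] y ≠ 0,
        Filter.Tendsto (fun k : ℕ => Projectivization.mk ℝ ((phiB b B)^[k] y) (hk k))
          Filter.atTop
          (nhds (Projectivization.mk ℝ ((0 : Fin n → ℝ), (1 : ℝ), (0 : ℝ))
            (by simp [Prod.ext_iff])))) := by
  refine ⟨hypPairing_phiB b B hsymm, ?_⟩
  rintro ⟨x, a, c⟩ hy hk
  have hv : ((0 : Fin n → ℝ), (1 : ℝ), (0 : ℝ)) ≠ 0 := by simp [Prod.ext_iff]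
  rcases eq_or_ne c 0 with rfl | hc
  · have hBx : -b B x ≠ 0 := by
      refine neg_ne_zero.2 fun h => hy ?_
      simp [phiB, h]
    rw [← Projectivization.mk_smul_eq hBx hv]
    exact Projectivization.tendsto_mk_of_tendsto_smul hk _
      (tendsto_inv_smul_phiB_iterate b B x a)
  · have hL : -(c * b B B / 2) ≠ 0 := by simp [hc, hB]
    rw [← Projectivization.mk_smul_eq hL hv]
    exact Projectivization.tendsto_mk_of_tendsto_smul hk _
      (tendsto_inv_sq_smul_phiB_iterate b B x a c)
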